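/- Covariance bounds for the noise decomposition (analytic core of Lemma 4.5). Let n ≥ 1 be an integer and H ∈ (0,1). There exist real numbers β ≥ α ≥ 1, depending only on H, such that for every real h ≥ 1 and every t ∈ ℝ^n, the quantity K_h(t) := (1/2)·( 2‖t‖^{2H} + 2(αh)^{2H} − ‖t − αh·e₁‖^{2H} − ‖t + αh·e₁‖^{2H} ) satisfies: (i) 0 ≤ K_h(t) ≤ 4(αh)^{2H} for all t ∈ ℝ^n; (ii) K_h(t) ≤ (1/8)(αh)^{2H} whenever ‖t‖ ≤ h; (iii) K_h(t) ≥ (1/2)(αh)^{2H} whenever ‖t‖ ≥ βh. (K_h(t) equals the covariance of η(v,t) with η(v, αh·e₁) + η(v, −αh·e₁) for a fractional Brownian field of Hurst parameter H.) -/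

import Mathlib

open MeasureTheory ProbabilityTheory

noncomputable section

/-- Vertices of the lattice `ℤ^d`. -/
abbrev Vert (d : ℕ) := Fin d → ℤ

/-- Points of `ℝ^n` with the Euclidean norm. -/
abbrev Pt (n : ℕ) := EuclideanSpace ℝ (Fin n)

/-- Nearest-neighbour adjacency on `ℤ^d`: `‖u - v‖₁ = 1`. -/
abbrev adj {d : ℕ} (u v : Vert d) : Prop := (∑ i, |u i - v i|) = 1

/-- The Dirichlet energy `‖∇φ‖²_Λ`: the sum of `‖φ_u - φ_v‖²` over unordered
nearest-neighbour edges `{u,v}` meeting `Λ`, each counted once (realized as half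
the corresponding sum over ordered pairs). -/
def dirEnergy {d n : ℕ} (Λ : Finset (Vert d)) (φ : Vert d → Pt n) : ℝ :=
  (1 / 2) * ∑ᶠ u : Vert d, ∑ᶠ v : Vert d,
    if adj u v ∧ (u ∈ Λ ∨ v ∈ Λ) then ‖φ u - φ v‖ ^ 2 else 0

/-- The finite-volume Hamiltonian `H^{η,Λ}(φ)`. -/
def hamiltonian {d n : ℕ} (η : Vert d → Pt n → ℝ) (Λ : Finset (Vert d))
    (φ : Vert d → Pt n) : ℝ :=
  (1 / 2) * dirEnergy Λ φ + ∑ v ∈ Λ, η v (φ v)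

/-- The Laplacian `(Δ_Λ φ)_v := ∑_{u ∼ v, {u,v} ∩ Λ ≠ ∅} (φ_u - φ_v)`. -/
def lap {d n : ℕ} (Λ : Finset (Vert d)) (φ : Vert d → Pt n) (v : Vert d) : Pt n :=
  ∑ᶠ u : Vert d, if adj u v ∧ (u ∈ Λ ∨ v ∈ Λ) then φ u - φ v else 0

/-- The pairing `(φ, ψ) := ∑_v φ_v ⬝ ψ_v` (for finitely supported `ψ`). -/
def pairing {d n : ℕ} (φ ψ : Vert d → Pt n) : ℝ :=
  ∑ᶠ v : Vert d, (inner ℝ (φ v) (ψ v) : ℝ)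

/-- The shifted-and-recentered environment `η^s(v,t) := η(v, t - s_v) - η(v, -s_v)`. -/
def shiftEnv {d n : ℕ} (η : Vert d → Pt n → ℝ) (s : Vert d → Pt n) :
    Vert d → Pt n → ℝ :=
  fun v t => η v (t - s v) - η v (-s v)

/-- The box `Λ_L = {-L, …, L}^d`. -/
def box (d : ℕ) (L : ℤ) : Finset (Vert d) :=
  Fintype.piFinset fun _ : Fin d => Finset.Icc (-L) L

/-- The fractional Brownian covariance `K(t,s) = (‖t‖^{2H} + ‖s‖^{2H} - ‖t-s‖^{2H})/2`. -/
def fbmCov (H : ℝ) {n : ℕ} (t s : Pt n) : ℝ :=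
  (‖t‖ ^ (2 * H) + ‖s‖ ^ (2 * H) - ‖t - s‖ ^ (2 * H)) / 2

/-- A fractional Brownian disorder of Hurst parameter `H`. -/
def IsFBMDisorder (d n : ℕ) (H : ℝ) {Ω : Type*} [MeasurableSpace Ω]
    (P : Measure Ω) (η : Ω → Vert d → Pt n → ℝ) : Prop :=
  (∀ v t, Measurable fun ω => η ω v t) ∧
  (∀ᵐ ω ∂P, ∀ v, Continuous (η ω v) ∧ η ω v 0 = 0) ∧
  iIndepFun (m := fun _ : Vert d => (inferInstance : MeasurableSpace (Pt n → ℝ)))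
    (fun v ω => η ω v) P ∧
  ∀ (v : Vert d) (k : ℕ) (t : Fin k → Pt n) (c : Fin k → ℝ),
    P.map (fun ω => ∑ i, c i * η ω v (t i)) =
      gaussianReal 0 (Real.toNNReal (∑ i, ∑ j, c i * c j * fbmCov H (t i) (t j)))

/-- A ground configuration (minimal surface) in a finite set `Λ` with zero
boundary values. -/
def IsGroundConfig {d n : ℕ} {Ω : Type*} [MeasurableSpace Ω] (P : Measure Ω)
    (η : Ω → Vert d → Pt n → ℝ) (Λ : Finset (Vert d)) (φ : Ω → Vert d → Pt n) : Prop :=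
  Measurable φ ∧
  ∀ᵐ ω ∂P, (∀ v ∉ Λ, φ ω v = 0) ∧
    ∀ ψ : Vert d → Pt n, (∀ v ∉ Λ, ψ v = 0) →
      hamiltonian (η ω) Λ (φ ω) ≤ hamiltonian (η ω) Λ ψ

/-- The ground energy `GE^{η,Λ}`. -/
def groundEnergy {d n : ℕ} {Ω : Type*} [MeasurableSpace Ω]
    (η : Ω → Vert d → Pt n → ℝ) (Λ : Finset (Vert d)) (φ : Ω → Vert d → Pt n)
    (ω : Ω) : ℝ :=
  hamiltonian (η ω) Λ (φ ω)

/-!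
Write `r = ‖t‖`, `a = αh = ‖y‖` with `y = αh • e₁`, and `u, v = ‖t ∓ y‖`. The parallelogram law
gives `u² + v² = 2 (r² + a²)`, so concavity of `x ↦ x ^ H` yields
`(u ^ (2H) + v ^ (2H)) / 2 ≤ (r² + a²) ^ H ≤ r ^ (2H) + a ^ (2H)`, i.e. `K ≥ 0`; for `r ≫ a` the
middle term is `r ^ (2H) + O(a² r ^ (2H - 2))`, which gives the lower bound `K ≥ a ^ (2H) / 2`.
For `r ≪ a` both `u, v ≥ a - r`, so `K ≤ r ^ (2H) + a ^ (2H) - (a - r) ^ (2H)` is a small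
fraction of `a ^ (2H)`. The bound `K ≤ 2 a ^ (2H)` comes from the triangle inequality, through
subadditivity of `x ↦ x ^ (2H)` when `2H ≤ 1` and its convexity when `2H ≥ 1`.
-/

open Real

section ScalarInequalities

variable {a b r p : ℝ}

lemma rpow_add_rpow_le_two_mul_rpow_half_add (ha : 0 ≤ a) (hb : 0 ≤ b) (hp₀ : 0 ≤ p)
    (hp₁ : p ≤ 1) : a ^ p + b ^ p ≤ 2 * ((a + b) / 2) ^ p := by
  have h := (concaveOn_rpow hp₀ hp₁).2 (Set.mem_Ici.2 ha) (Set.mem_Ici.2 hb)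
    (by norm_num : (0 : ℝ) ≤ 1 / 2) (by norm_num : (0 : ℝ) ≤ 1 / 2) (by norm_num)
  simp only [smul_eq_mul] at h
  rw [show (1 / 2 : ℝ) * a + 1 / 2 * b = (a + b) / 2 by ring] at h
  linarith

lemma two_mul_rpow_half_add_le_rpow_add_rpow (ha : 0 ≤ a) (hb : 0 ≤ b) (hp : 1 ≤ p) :
    2 * ((a + b) / 2) ^ p ≤ a ^ p + b ^ p := by
  have h := (convexOn_rpow hp).2 (Set.mem_Ici.2 ha) (Set.mem_Ici.2 hb)
    (by norm_num : (0 : ℝ) ≤ 1 / 2) (by norm_num : (0 : ℝ) ≤ 1 / 2) (by norm_num)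
  simp only [smul_eq_mul] at h
  rw [show (1 / 2 : ℝ) * a + 1 / 2 * b = (a + b) / 2 by ring] at h
  linarith

lemma rpow_two_mul (ha : 0 ≤ a) (p : ℝ) : a ^ (2 * p) = (a ^ 2) ^ p := by
  simpa using rpow_natCast_mul ha 2 p

lemma sq_add_sq_rpow_le (ha : 0 ≤ a) (hb : 0 ≤ b) (hp₀ : 0 ≤ p) (hp₁ : p ≤ 1) :
    (a ^ 2 + b ^ 2) ^ p ≤ a ^ (2 * p) + b ^ (2 * p) := by
  rw [rpow_two_mul ha, rpow_two_mul hb]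
  exact rpow_add_le_add_rpow (sq_nonneg a) (sq_nonneg b) hp₀ hp₁

-- `(1 - x) ^ p ≥ (1 - x) ^ 2 ≥ 1 - 2 x` for `x = r / a ∈ [0, 1]`.
lemma rpow_sub_rpow_sub_le (hr : 0 ≤ r) (hra : r ≤ a) (hp₀ : 0 ≤ p) (hp₂ : p ≤ 2) :
    a ^ p - (a - r) ^ p ≤ 2 * (r / a) * a ^ p := by
  obtain rfl | ha := (hr.trans hra).eq_or_lt
  · simp [le_antisymm hra hr]
  have hx₀ : 0 ≤ 1 - r / a := by rw [sub_nonneg, div_le_one ha]; exact hra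
  have hx₁ : 1 - r / a ≤ 1 := by linarith [div_nonneg hr ha.le]
  have hsq : 1 - 2 * (r / a) ≤ (1 - r / a) ^ p :=
    calc 1 - 2 * (r / a) ≤ (1 - r / a) ^ (2 : ℝ) := by rw [rpow_two]; nlinarith
      _ ≤ (1 - r / a) ^ p := rpow_le_rpow_of_exponent_ge' hx₀ hx₁ hp₀ hp₂
  have hsub : a - r = a * (1 - r / a) := by field_simp
  rw [hsub, mul_rpow ha.le hx₀]
  nlinarith [rpow_nonneg ha.le p]

-- `(r² + a²) ^ p = r ^ (2p) (1 + a² / r²) ^ p ≤ r ^ (2p) + a² r ^ (2p - 2)`, and the hypothesis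
-- raised to the power `2 - 2p` bounds the last term.
lemma sq_add_sq_rpow_le_of_two_rpow_mul_le (ha : 0 < a) (hp₁ : p < 1)
    (hr : 2 ^ (2 - 2 * p)⁻¹ * a ≤ r) :
    (r ^ 2 + a ^ 2) ^ p ≤ r ^ (2 * p) + a ^ (2 * p) / 2 := by
  have hq : 0 < 2 - 2 * p := by linarith
  have hr₀ : 0 < r := lt_of_lt_of_le (by positivity) hr
  have hsplit : ∀ x : ℝ, 0 < x → x ^ 2 = x ^ (2 * p) * x ^ (2 - 2 * p) := fun x hx => by
    rw [← rpow_add hx, add_sub_cancel, rpow_two]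
  have hpow : 2 * a ^ (2 - 2 * p) ≤ r ^ (2 - 2 * p) :=
    calc 2 * a ^ (2 - 2 * p) = (2 ^ (2 - 2 * p)⁻¹ * a) ^ (2 - 2 * p) := by
          rw [mul_rpow (by positivity) ha.le, rpow_inv_rpow (by norm_num) hq.ne']
      _ ≤ r ^ (2 - 2 * p) := rpow_le_rpow (by positivity) hr hq.le
  have hdrop : (1 + a ^ 2 / r ^ 2) ^ p ≤ 1 + a ^ 2 / r ^ 2 :=
    rpow_le_self_of_one_le (by linarith [div_nonneg (sq_nonneg a) (sq_nonneg r)]) hp₁.le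
  calc (r ^ 2 + a ^ 2) ^ p = r ^ (2 * p) * (1 + a ^ 2 / r ^ 2) ^ p := by
        rw [rpow_two_mul hr₀.le, ← mul_rpow (sq_nonneg r) (by positivity)]
        congr 1; field_simp
    _ ≤ r ^ (2 * p) * (1 + a ^ 2 / r ^ 2) :=
        mul_le_mul_of_nonneg_left hdrop (rpow_nonneg hr₀.le _)
    _ = r ^ (2 * p) + a ^ (2 * p) * (a ^ (2 - 2 * p) / r ^ (2 - 2 * p)) := by
        rw [hsplit a ha, hsplit r hr₀]
        field_simp
    _ ≤ r ^ (2 * p) + a ^ (2 * p) / 2 := by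
        have hratio : a ^ (2 - 2 * p) / r ^ (2 - 2 * p) ≤ 1 / 2 := by
          rw [div_le_iff₀ (by positivity)]; linarith
        nlinarith [rpow_nonneg ha.le (2 * p)]

end ScalarInequalities

section FbmCovSymm

variable {E : Type*} [NormedAddCommGroup E] {H : ℝ} {t y : E}

/-- `fbmCov H t y + fbmCov H t (-y)`, the covariance of `η t` with `η y + η (-y)`. -/
def fbmCovSymm (H : ℝ) (t y : E) : ℝ :=
  (1 / 2) * (2 * ‖t‖ ^ (2 * H) + 2 * ‖y‖ ^ (2 * H) - ‖t - y‖ ^ (2 * H) - ‖t + y‖ ^ (2 * H))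

lemma fbmCovSymm_le_of_norm_le (hH₀ : 0 ≤ H) (hty : ‖t‖ ≤ ‖y‖) :
    fbmCovSymm H t y ≤ ‖t‖ ^ (2 * H) + ‖y‖ ^ (2 * H) - (‖y‖ - ‖t‖) ^ (2 * H) := by
  have hp : 0 ≤ 2 * H := by linarith
  have hle : ∀ z : E, ‖y‖ - ‖t‖ ≤ ‖z‖ → (‖y‖ - ‖t‖) ^ (2 * H) ≤ ‖z‖ ^ (2 * H) :=
    fun z hz => rpow_le_rpow (sub_nonneg.2 hty) hz hp
  have h₁ := hle (t - y) (by simpa [norm_sub_rev] using norm_sub_norm_le y t)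
  have h₂ := hle (t + y) (by simpa [add_comm] using norm_sub_norm_le y (-t))
  unfold fbmCovSymm
  linarith

-- `‖t‖ ^ (2H) ≤ ‖y‖ ^ (2H) / 16` and `‖y‖ ^ (2H) - (‖y‖ - ‖t‖) ^ (2H) ≤ ‖y‖ ^ (2H) / 16`.
lemma fbmCovSymm_le_of_mul_norm_le {α : ℝ} (hH₀ : 0 ≤ H) (hH₁ : H ≤ 1) (hα : 32 ≤ α)
    (hαH : 16 ≤ α ^ (2 * H)) (hty : α * ‖t‖ ≤ ‖y‖) :
    fbmCovSymm H t y ≤ ‖y‖ ^ (2 * H) / 8 := by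
  have hp : 0 ≤ 2 * H := by linarith
  have hty' : ‖t‖ ≤ ‖y‖ := le_trans (by nlinarith [norm_nonneg t]) hty
  have hsmall : 16 * ‖t‖ ^ (2 * H) ≤ ‖y‖ ^ (2 * H) :=
    calc 16 * ‖t‖ ^ (2 * H) ≤ α ^ (2 * H) * ‖t‖ ^ (2 * H) := by
          gcongr
      _ = (α * ‖t‖) ^ (2 * H) := (mul_rpow (by linarith) (norm_nonneg t)).symm
      _ ≤ ‖y‖ ^ (2 * H) := rpow_le_rpow (by positivity) hty hp
  have hratio : ‖t‖ / ‖y‖ ≤ 1 / 32 := by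
    rcases (norm_nonneg y).eq_or_lt with hy | hy
    · simp [← hy]
    · rw [div_le_iff₀ hy]; nlinarith [norm_nonneg t]
  have := fbmCovSymm_le_of_norm_le hH₀ hty'
  have := rpow_sub_rpow_sub_le (norm_nonneg t) hty' hp (by linarith)
  nlinarith [rpow_nonneg (norm_nonneg y) (2 * H)]

lemma fbmCovSymm_le_two_mul [NormedSpace ℝ E] (hH₀ : 0 ≤ H) (t y : E) :
    fbmCovSymm H t y ≤ 2 * ‖y‖ ^ (2 * H) := by
  suffices 2 * ‖t‖ ^ (2 * H) ≤ ‖t - y‖ ^ (2 * H) + ‖t + y‖ ^ (2 * H) + 2 * ‖y‖ ^ (2 * H) by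
    unfold fbmCovSymm; linarith
  have hp : 0 ≤ 2 * H := by linarith
  rcases le_total (2 * H) 1 with hsub | hsup
  · have hle : ∀ z : E, ‖t‖ ≤ ‖z‖ + ‖y‖ → ‖t‖ ^ (2 * H) ≤ ‖z‖ ^ (2 * H) + ‖y‖ ^ (2 * H) :=
      fun z hz => (rpow_le_rpow (norm_nonneg _) hz hp).trans
        (rpow_add_le_add_rpow (norm_nonneg _) (norm_nonneg _) hp hsub)
    have h₁ := hle (t - y) (norm_le_norm_sub_add t y)
    have h₂ := hle (t + y) (by simpa using norm_le_norm_sub_add t (-y))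
    linarith
  · have hmid : ‖t‖ ≤ (‖t - y‖ + ‖t + y‖) / 2 := by
      have := norm_add_le (t - y) (t + y)
      rw [show t - y + (t + y) = (2 : ℝ) • t by module, norm_smul, Real.norm_two] at this
      linarith
    have h₁ := rpow_le_rpow (norm_nonneg t) hmid hp
    have h₂ :=
      two_mul_rpow_half_add_le_rpow_add_rpow (norm_nonneg (t - y)) (norm_nonneg (t + y)) hsup
    linarith [rpow_nonneg (norm_nonneg y) (2 * H)]

variable [InnerProductSpace ℝ E]

-- Concavity of `x ↦ x ^ H` on the squared norms, and the parallelogram law.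
lemma norm_sub_rpow_add_norm_add_rpow_le (hH₀ : 0 ≤ H) (hH₁ : H ≤ 1) (t y : E) :
    ‖t - y‖ ^ (2 * H) + ‖t + y‖ ^ (2 * H) ≤ 2 * (‖t‖ ^ 2 + ‖y‖ ^ 2) ^ H := by
  have hpar : (‖t - y‖ ^ 2 + ‖t + y‖ ^ 2) / 2 = ‖t‖ ^ 2 + ‖y‖ ^ 2 := by
    have := parallelogram_law_with_norm ℝ t y
    linarith
  rw [rpow_two_mul (norm_nonneg _), rpow_two_mul (norm_nonneg _), ← hpar]
  exact rpow_add_rpow_le_two_mul_rpow_half_add (sq_nonneg _) (sq_nonneg _) hH₀ hH₁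

lemma fbmCovSymm_nonneg (hH₀ : 0 ≤ H) (hH₁ : H ≤ 1) (t y : E) : 0 ≤ fbmCovSymm H t y := by
  have := norm_sub_rpow_add_norm_add_rpow_le hH₀ hH₁ t y
  have := sq_add_sq_rpow_le (norm_nonneg t) (norm_nonneg y) hH₀ hH₁
  unfold fbmCovSymm
  linarith

lemma half_le_fbmCovSymm (hH₀ : 0 ≤ H) (hH₁ : H < 1) (hy : y ≠ 0)
    (hty : 2 ^ (2 - 2 * H)⁻¹ * ‖y‖ ≤ ‖t‖) :
    ‖y‖ ^ (2 * H) / 2 ≤ fbmCovSymm H t y := by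
  have := norm_sub_rpow_add_norm_add_rpow_le hH₀ hH₁.le t y
  have := sq_add_sq_rpow_le_of_two_rpow_mul_le (norm_pos_iff.2 hy) hH₁ hty
  unfold fbmCovSymm
  linarith

end FbmCovSymm

/-- **Covariance bounds for the noise decomposition** (analytic core of Lemma 4.5). -/
theorem noise_decomposition_covariance (H : ℝ) (hH : H ∈ Set.Ioo (0 : ℝ) 1) :
    ∃ α β : ℝ, 1 ≤ α ∧ α ≤ β ∧
      ∀ (n : ℕ) (hn : 0 < n) (h : ℝ), 1 ≤ h → ∀ t : Pt n,
        let e₁ : Pt n := EuclideanSpace.single (⟨0, hn⟩ : Fin n) 1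
        let K : ℝ := (1 / 2) * (2 * ‖t‖ ^ (2 * H) + 2 * (α * h) ^ (2 * H) -
          ‖t - (α * h) • e₁‖ ^ (2 * H) - ‖t + (α * h) • e₁‖ ^ (2 * H))
        (0 ≤ K ∧ K ≤ 4 * (α * h) ^ (2 * H)) ∧
        (‖t‖ ≤ h → K ≤ (1 / 8) * (α * h) ^ (2 * H)) ∧
        (β * h ≤ ‖t‖ → (1 / 2) * (α * h) ^ (2 * H) ≤ K) := by
  obtain ⟨hH₀, hH₁⟩ := hH
  -- `α` makes `‖t‖ ^ (2H)` and `‖t‖ / (αh)` small for `‖t‖ ≤ h`; `β = 2 ^ (2 - 2H)⁻¹ α` makes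
  -- `2 (αh) ^ (2 - 2H) ≤ ‖t‖ ^ (2 - 2H)` for `‖t‖ ≥ βh`.
  set α : ℝ := 32 * 16 ^ (2 * H)⁻¹
  have hα : 32 ≤ α :=
    le_mul_of_one_le_right (by norm_num) (one_le_rpow (by norm_num) (by positivity))
  have hαH : 16 ≤ α ^ (2 * H) := by
    rw [mul_rpow (by norm_num) (by positivity), rpow_inv_rpow (by norm_num) (by positivity)]
    linarith [one_le_rpow (by norm_num : (1 : ℝ) ≤ 32) (by positivity : 0 ≤ 2 * H)]
  have hβ : α ≤ 2 ^ (2 - 2 * H)⁻¹ * α :=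
    le_mul_of_one_le_left (by linarith) (one_le_rpow (by norm_num) (inv_nonneg.2 (by linarith)))
  refine ⟨α, 2 ^ (2 - 2 * H)⁻¹ * α, by linarith, hβ, ?_⟩
  intro n hn h hh t e₁ K
  set y : Pt n := (α * h) • e₁
  have hαh : 0 < α * h := mul_pos (by linarith) (by linarith)
  have hy : ‖y‖ = α * h := by
    rw [norm_smul, PiLp.norm_single, norm_one, mul_one, Real.norm_of_nonneg hαh.le]
  have hK : K = fbmCovSymm H t y := by simp only [fbmCovSymm, hy]; rfl
  rw [hK, ← hy]
  refine ⟨⟨fbmCovSymm_nonneg hH₀.le hH₁.le t y, ?_⟩, fun ht => ?_, fun ht => ?_⟩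
  · linarith [fbmCovSymm_le_two_mul hH₀.le t y, rpow_nonneg (norm_nonneg y) (2 * H)]
  · linarith [fbmCovSymm_le_of_mul_norm_le hH₀.le hH₁.le hα hαH
      (hy ▸ mul_le_mul_of_nonneg_left ht (by linarith) : α * ‖t‖ ≤ ‖y‖)]
  · have hy₀ : y ≠ 0 := norm_ne_zero_iff.1 (hy ▸ hαh.ne')
    have hty : 2 ^ (2 - 2 * H)⁻¹ * ‖y‖ ≤ ‖t‖ := by rwa [hy, ← mul_assoc]
    linarith [half_le_fbmCovSymm hH₀.le hH₁ hy₀ hty]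

end
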